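/- (Theorem 6.25, compactness criterion.) Assume in addition that K is proper (locally compact), as holds for ℚ_p and its quadratic extensions. A continuous K-linear operator T : H →L[K] H is a compact operator (Lean: IsCompactOperator T, i.e. some neighborhood of 0 has relatively compact image) if and only if the row suprema of its matrix tend to zero: Tendsto (fun m => ⨆ n : ℕ, ‖(T (e n)) m‖) atTop (nhds 0). -/

import Mathlib

open Filter

noncomputable section

variable (K : Type*) [NontriviallyNormedField K] [IsUltrametricDist K]
  [CompleteSpace K] [StarRing K] [NormedStarGroup K]

/-- The p-adic coordinate Hilbert space: zero-convergent sequences in `K` with sup norm. -/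
abbrev H := ZeroAtInftyContinuousMap ℕ K

/-- The standard basis vectors of `H K`. -/
def e (n : ℕ) : H K where
  toFun := fun m => if m = n then 1 else 0
  continuous_toFun := continuous_of_discreteTopology
  zero_at_infty' := by
    rw [cocompact_eq_cofinite, Nat.cofinite_eq_atTop]
    refine Filter.Tendsto.congr' ?_ tendsto_const_nhds
    filter_upwards [Filter.eventually_gt_atTop n] with m hm
    simp [Nat.ne_of_gt hm]

/-- The canonical inner product on `H K`: `⟪x, y⟫ = ∑' i, star (x i) * y i`. -/
def inner' (x y : H K) : K := ∑' i, star (x i) * y i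

/-- A bounded operator is of trace class if its matrix entries vanish along the
cofinite filter of `ℕ × ℕ`. -/
def IsTraceClass (T : H K →L[K] H K) : Prop :=
  Tendsto (fun q : ℕ × ℕ => (T (e K q.2)) q.1) Filter.cofinite (nhds 0)

/-!
If `T` is compact, its columns `T eₙ` form a relatively compact subset of `C₀(ℕ, K)`, on which the
coordinates tend to zero uniformly; hence the row suprema tend to zero. Conversely, expanding
`x = ∑ xₙ eₙ` and using the ultrametric inequality gives `‖(T x) m‖ ≤ ‖x‖ · sup_n ‖(T eₙ) m‖`, so
the truncations of `T` to its first `M` rows converge to `T` in operator norm. Each truncation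
factors through the locally compact space `K^M`, hence is compact, and compact operators form a
closed set.
-/

open Topology ZeroAtInftyContinuousMap
open scoped ZeroAtInfty

namespace ZeroAtInftyContinuousMap

variable {α β : Type*} [TopologicalSpace α] [SeminormedAddCommGroup β]

lemma norm_apply_le (f : C₀(α, β)) (x : α) : ‖f x‖ ≤ ‖f‖ := by
  rw [← norm_toBCF_eq_norm]
  exact f.toBCF.norm_coe_le_norm x

lemma norm_le_iff {f : C₀(α, β)} {C : ℝ} (hC : 0 ≤ C) : ‖f‖ ≤ C ↔ ∀ x, ‖f x‖ ≤ C := by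
  rw [← norm_toBCF_eq_norm]
  exact BoundedContinuousFunction.norm_le hC

lemma eventually_forall_norm_apply_lt_of_totallyBounded {S : Set C₀(α, β)}
    (hS : TotallyBounded S) {ε : ℝ} (hε : 0 < ε) :
    ∀ᶠ x in cocompact α, ∀ f ∈ S, ‖f x‖ < ε := by
  obtain ⟨t, ht, hSt⟩ := Metric.totallyBounded_iff.1 hS (ε / 2) (half_pos hε)
  have hnet : ∀ᶠ x in cocompact α, ∀ g ∈ t, ‖g x‖ < ε / 2 :=
    (eventually_all_finite ht).2 fun g _ =>
      (tendsto_norm_zero.comp (zero_at_infty g)).eventually_lt_const (half_pos hε)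
  filter_upwards [hnet] with x hx f hf
  obtain ⟨g, hg, hfg⟩ := Set.mem_iUnion₂.1 (hSt hf)
  rw [Metric.mem_ball, dist_eq_norm] at hfg
  calc ‖f x‖ = ‖(f - g) x + g x‖ := by simp
    _ ≤ ‖(f - g) x‖ + ‖g x‖ := norm_add_le _ _
    _ < ε / 2 + ε / 2 := add_lt_add_of_le_of_lt ((norm_apply_le _ x).trans hfg.le) (hx g hg)
    _ = ε := add_halves ε

variable (𝕜 : Type*) [NormedField 𝕜] [NormedSpace 𝕜 β]

def evalCLM (x : α) : C₀(α, β) →L[𝕜] β :=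
  LinearMap.mkContinuous
    { toFun f := f x
      map_add' _ _ := rfl
      map_smul' _ _ := rfl }
    1 fun f => by simpa using norm_apply_le f x

@[simp] lemma evalCLM_apply (x : α) (f : C₀(α, β)) : evalCLM 𝕜 x f = f x := rfl

end ZeroAtInftyContinuousMap

section Coordinates

variable {𝕜 : Type*} [NontriviallyNormedField 𝕜]

lemma e_apply (n m : ℕ) : e 𝕜 n m = if m = n then 1 else 0 := rfl

lemma norm_e_le_one (n : ℕ) : ‖e 𝕜 n‖ ≤ 1 :=
  (norm_le_iff zero_le_one).2 fun m => by
    rw [e_apply]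
    split_ifs <;> simp

lemma sum_smul_e_apply (g : ℕ → 𝕜) (s : Finset ℕ) (m : ℕ) :
    (∑ n ∈ s, g n • e 𝕜 n) m = if m ∈ s then g m else 0 := by
  rw [← evalCLM_apply 𝕜, map_sum]
  simp [e_apply]

lemma hasSum_smul_e (x : H 𝕜) : HasSum (fun n => x n • e 𝕜 n) x := by
  rw [HasSum, SummationFilter.unconditional_filter, Metric.tendsto_atTop]
  intro ε hε
  have hx : Tendsto x atTop (𝓝 0) := cocompact_eq_atTop (α := ℕ) ▸ zero_at_infty x
  obtain ⟨N, hN⟩ :=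
    eventually_atTop.1 ((tendsto_norm_zero.comp hx).eventually_lt_const (half_pos hε))
  refine ⟨Finset.range N, fun s hs => ?_⟩
  rw [dist_eq_norm]
  refine lt_of_le_of_lt ((norm_le_iff (half_pos hε).le).2 fun m => ?_) (half_lt_self hε)
  rw [ZeroAtInftyContinuousMap.sub_apply, sum_smul_e_apply]
  split_ifs with hm
  · simpa using (half_pos hε).le
  · have hNm : N ≤ m := not_lt.1 fun h => hm (hs (Finset.mem_range.2 h))
    simpa using (hN m hNm).le

/-- An ultrametric target turns the expansion `x = ∑ xₙ eₙ` into a sup bound. -/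
lemma norm_apply_le_mul_of_forall_norm_apply_e_le {F : Type*} [NormedAddCommGroup F]
    [NormedSpace 𝕜 F] [IsUltrametricDist F] (φ : H 𝕜 →L[𝕜] F) {C : ℝ} (hC : 0 ≤ C)
    (h : ∀ n, ‖φ (e 𝕜 n)‖ ≤ C) (x : H 𝕜) : ‖φ x‖ ≤ ‖x‖ * C := by
  rw [← ((hasSum_smul_e x).mapL φ).tsum_eq]
  refine IsUltrametricDist.norm_tsum_le_of_forall_le_of_nonneg (by positivity) fun n => ?_
  rw [map_smul, norm_smul]
  exact mul_le_mul (norm_apply_le x n) (h n) (norm_nonneg _) (norm_nonneg _)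

end Coordinates

section Truncation

variable {𝕜 : Type*} [NontriviallyNormedField 𝕜]

def coordsCLM (M : ℕ) : H 𝕜 →L[𝕜] (Fin M → 𝕜) :=
  ContinuousLinearMap.pi fun i => evalCLM 𝕜 (i : ℕ)

def sumSmulECLM (M : ℕ) : (Fin M → 𝕜) →L[𝕜] H 𝕜 :=
  ∑ i : Fin M, (ContinuousLinearMap.proj i).smulRight (e 𝕜 i)

/-- Factored through `Fin M → 𝕜`, so that `truncation M ∘L T` is compact as soon as `𝕜` is
proper. -/
def truncation (M : ℕ) : H 𝕜 →L[𝕜] H 𝕜 :=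
  (sumSmulECLM M).comp (coordsCLM M)

lemma truncation_apply (M : ℕ) (x : H 𝕜) (m : ℕ) :
    truncation M x m = if m < M then x m else 0 := by
  have h := sum_smul_e_apply x (Finset.range M) m
  rw [← Fin.sum_univ_eq_sum_range (fun n => x n • e 𝕜 n)] at h
  simpa [truncation, sumSmulECLM, coordsCLM] using h

lemma isCompactOperator_truncation_comp [ProperSpace 𝕜] {E : Type*} [AddCommMonoid E]
    [TopologicalSpace E] [Module 𝕜 E] (M : ℕ) (T : E →L[𝕜] H 𝕜) :
    IsCompactOperator (truncation M ∘L T) :=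
  (isCompactOperator_of_locallyCompactSpace_rng (sumSmulECLM (𝕜 := 𝕜) M)).comp_clm
    (coordsCLM M ∘L T)

lemma norm_sub_truncation_comp_le {E : Type*} [SeminormedAddCommGroup E] [NormedSpace 𝕜 E]
    (T : E →L[𝕜] H 𝕜) (M : ℕ) {ε : ℝ} (hε : 0 ≤ ε)
    (h : ∀ x, ∀ m ≥ M, ‖T x m‖ ≤ ε * ‖x‖) : ‖T - truncation M ∘L T‖ ≤ ε := by
  refine ContinuousLinearMap.opNorm_le_bound _ hε fun x =>
    (norm_le_iff (by positivity)).2 fun m => ?_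
  rw [_root_.sub_apply, ContinuousLinearMap.comp_apply, ZeroAtInftyContinuousMap.sub_apply,
    truncation_apply]
  split_ifs with hm
  · simpa using mul_nonneg hε (norm_nonneg x)
  · simpa using h x m (not_lt.1 hm)

end Truncation

section RowNorm

variable {𝕜 : Type*} [NontriviallyNormedField 𝕜]

def rowNorm (T : H 𝕜 →L[𝕜] H 𝕜) (m : ℕ) : ℝ := ⨆ n, ‖T (e 𝕜 n) m‖

lemma rowNorm_nonneg (T : H 𝕜 →L[𝕜] H 𝕜) (m : ℕ) : 0 ≤ rowNorm T m :=
  Real.iSup_nonneg fun _ => norm_nonneg _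

lemma norm_apply_e_apply_le_rowNorm (T : H 𝕜 →L[𝕜] H 𝕜) (m n : ℕ) :
    ‖T (e 𝕜 n) m‖ ≤ rowNorm T m :=
  le_ciSup (f := fun n => ‖T (e 𝕜 n) m‖) ⟨‖T‖, by
    rintro _ ⟨k, rfl⟩
    exact (norm_apply_le _ m).trans ((T.le_opNorm_of_le (norm_e_le_one k)).trans_eq (mul_one _))⟩
    n

lemma norm_apply_apply_le_rowNorm_mul [IsUltrametricDist 𝕜] (T : H 𝕜 →L[𝕜] H 𝕜) (x : H 𝕜)
    (m : ℕ) : ‖T x m‖ ≤ rowNorm T m * ‖x‖ := by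
  rw [mul_comm]
  exact norm_apply_le_mul_of_forall_norm_apply_e_le (evalCLM 𝕜 m ∘L T) (rowNorm_nonneg T m)
    (norm_apply_e_apply_le_rowNorm T m) x

theorem tendsto_rowNorm_of_isCompactOperator {T : H 𝕜 →L[𝕜] H 𝕜} (hT : IsCompactOperator T) :
    Tendsto (rowNorm T) atTop (𝓝 0) := by
  have hcols : TotallyBounded (T '' Set.range (e 𝕜)) := by
    have hbdd : Bornology.IsBounded (Set.range (e 𝕜)) :=
      isBounded_iff_forall_norm_le.2 ⟨1, by rintro _ ⟨n, rfl⟩; exact norm_e_le_one n⟩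
    exact (hT.isCompact_closure_image_of_bounded hbdd).totallyBounded.subset subset_closure
  rw [Metric.tendsto_nhds]
  intro ε hε
  have hdecay := eventually_forall_norm_apply_lt_of_totallyBounded hcols (half_pos hε)
  rw [cocompact_eq_atTop] at hdecay
  filter_upwards [hdecay] with m hm
  rw [Real.dist_0_eq_abs, abs_of_nonneg (rowNorm_nonneg T m)]
  exact (Real.iSup_le (fun n => (hm _ (Set.mem_image_of_mem T ⟨n, rfl⟩)).le)
    (half_pos hε).le).trans_lt (half_lt_self hε)

lemma tendsto_truncation_comp [IsUltrametricDist 𝕜] {T : H 𝕜 →L[𝕜] H 𝕜}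
    (hT : Tendsto (rowNorm T) atTop (𝓝 0)) :
    Tendsto (fun M => truncation M ∘L T) atTop (𝓝 T) := by
  refine (Metric.tendsto_atTop (α := H 𝕜 →L[𝕜] H 𝕜)).2 fun ε hε => ?_
  obtain ⟨N, hN⟩ := eventually_atTop.1 (hT.eventually_lt_const (half_pos hε))
  refine ⟨N, fun M hM => (dist_eq_norm' (truncation M ∘L T) T).trans_lt ?_⟩
  refine (norm_sub_truncation_comp_le T M (half_pos hε).le fun x m hm => ?_).trans_lt
    (half_lt_self hε)
  exact (norm_apply_apply_le_rowNorm_mul T x m).trans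
    (mul_le_mul_of_nonneg_right (hN m (hM.trans hm)).le (norm_nonneg x))

theorem isCompactOperator_of_tendsto_rowNorm [ProperSpace 𝕜] [IsUltrametricDist 𝕜]
    {T : H 𝕜 →L[𝕜] H 𝕜} (hT : Tendsto (rowNorm T) atTop (𝓝 0)) : IsCompactOperator T :=
  isCompactOperator_of_tendsto (tendsto_truncation_comp hT)
    (Eventually.of_forall fun M => isCompactOperator_truncation_comp M T)

end RowNorm

/-- Compactness criterion: a bounded operator is compact iff the row suprema of its
matrix tend to zero. -/
theorem stmt15 [ProperSpace K] (T : H K →L[K] H K) :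
    IsCompactOperator T ↔
      Tendsto (fun m => ⨆ n : ℕ, ‖(T (e K n)) m‖) atTop (nhds 0) :=
  ⟨tendsto_rowNorm_of_isCompactOperator, isCompactOperator_of_tendsto_rowNorm⟩
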